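/- Let P be a set of n points in ℝ^d, let k ≥ 1 divide n, and let (c_i, r_i, P_i), i = 1, …, n/k, be a 2-approximate quorum clustering of P with parameter k. For a query point q ∈ ℝ^d write q̂ = (q, 0) ∈ ℝ^{d+1} and b̂_i = (c_i, r_i) ∈ ℝ^{d+1}. If an index j satisfies ‖q̂ − b̂_j‖ ≤ 2 · min_{i = 1, …, n/k} ‖q̂ − b̂_i‖ (Euclidean norm in ℝ^{d+1}; i.e., b̂_j is a 2-approximate nearest neighbor of q̂ among the lifted balls), then the value v = ‖q − c_j‖ + r_j satisfies v/(10√2) ≤ d_k(P,q) ≤ v; in particular v is a 15-approximation of d_k(P,q). -/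

import Mathlib

open Metric

/-- The `k`-th nearest neighbor distance of `q` to the finite point set `P`. -/
noncomputable def kthNNDist {d : ℕ} (k : ℕ) (P : Finset (EuclideanSpace ℝ (Fin d)))
    (q : EuclideanSpace ℝ (Fin d)) : ℝ :=
  sInf {r : ℝ | 0 ≤ r ∧ k ≤ (P.filter fun p => dist q p ≤ r).card}

/-- `rad_k Q`: the radius of the smallest closed ball containing at least `k` points of `Q`. -/
noncomputable def radk {d : ℕ} (k : ℕ) (Q : Finset (EuclideanSpace ℝ (Fin d))) : ℝ :=
  sInf (Set.range fun q => kthNNDist k Q q)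

/-- Lift a point `p ∈ ℝ^d` together with a real `t` to the point `(p, t) ∈ ℝ^{d+1}`. -/
noncomputable def liftPt {d : ℕ} (p : EuclideanSpace ℝ (Fin d)) (t : ℝ) :
    EuclideanSpace ℝ (Fin (d + 1)) :=
  WithLp.toLp 2 (Fin.snoc (α := fun _ => ℝ) (WithLp.ofLp p) t)

/-!
The lifted distance `‖q̂ - b̂_i‖ = √(‖q - c_i‖² + r_i²)` is within a factor `√2` of
`‖q - c_i‖ + r_i`. With `ρ = d_k(P, q)`, the first cluster `P_i` that meets the ball `B(q, ρ)`
is chosen while all `k` points of that ball are still present, so `r_i ≤ 2 rad_k(Q_i) ≤ 2ρ`,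
and a common point gives `‖q - c_i‖ ≤ ρ + r_i`. Hence `‖q̂ - b̂_i‖ ≤ 5ρ`, the approximate
nearest neighbour has `‖q̂ - b̂_j‖ ≤ 10ρ`, and `‖q - c_j‖ + r_j ≤ 10√2 ρ`. The upper bound holds
because `B(q, ‖q - c_j‖ + r_j)` contains the `k` points of `P_j`.
-/

section NearestNeighbor

variable {d k : ℕ} {P : Finset (EuclideanSpace ℝ (Fin d))} {q : EuclideanSpace ℝ (Fin d)}

theorem kthNNDist_nonneg : 0 ≤ kthNNDist k P q := by
  rcases Set.eq_empty_or_nonempty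
    {r : ℝ | 0 ≤ r ∧ k ≤ (P.filter fun p => dist q p ≤ r).card} with h | h
  · rw [kthNNDist, h, Real.sInf_empty]
  · exact le_csInf h fun _ hr => hr.1

theorem kthNNDist_le_of_le_card_filter {r : ℝ} (hr : 0 ≤ r)
    (hk : k ≤ (P.filter fun p => dist q p ≤ r).card) : kthNNDist k P q ≤ r :=
  csInf_le ⟨0, fun _ hx => hx.1⟩ ⟨hr, hk⟩

theorem kthNNDist_le_of_subset_closedBall {S : Finset (EuclideanSpace ℝ (Fin d))}
    {c : EuclideanSpace ℝ (Fin d)} {r : ℝ} (hSP : S ⊆ P) (hkS : k ≤ S.card)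
    (hS : ↑S ⊆ closedBall c r) (hr : 0 ≤ r) : kthNNDist k P q ≤ dist q c + r := by
  refine kthNNDist_le_of_le_card_filter (by positivity) (hkS.trans (Finset.card_le_card ?_))
  intro p hp
  refine Finset.mem_filter.mpr ⟨hSP hp, ?_⟩
  calc dist q p ≤ dist q c + dist p c := dist_triangle_right q p c
    _ ≤ dist q c + r := by gcongr; exact mem_closedBall.mp (hS hp)

theorem isClosed_setOf_le_card_filter_dist_le :
    IsClosed {r : ℝ | k ≤ (P.filter fun p => dist q p ≤ r).card} := by
  classical
  have hunion : {r : ℝ | k ≤ (P.filter fun p => dist q p ≤ r).card} =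
      ⋃ T ∈ P.powersetCard k, ⋂ p ∈ T, Set.Ici (dist q p) := by
    ext r
    simp only [Set.mem_ofPred_eq, Set.mem_iUnion, Set.mem_iInter, Set.mem_Ici,
      Finset.mem_powersetCard, exists_prop]
    constructor
    · intro h
      obtain ⟨T, hT, hTk⟩ := Finset.exists_subset_card_eq h
      exact ⟨T, ⟨hT.trans (Finset.filter_subset _ _), hTk⟩,
        fun p hp => (Finset.mem_filter.mp (hT hp)).2⟩
    · rintro ⟨T, ⟨hTP, rfl⟩, hT⟩
      exact Finset.card_le_card fun p hp => Finset.mem_filter.mpr ⟨hTP hp, hT p hp⟩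
  rw [hunion]
  exact isClosed_biUnion_finset fun T _ => isClosed_biInter fun p _ => isClosed_Ici

theorem le_card_filter_dist_le_kthNNDist (hkP : k ≤ P.card) :
    k ≤ (P.filter fun p => dist q p ≤ kthNNDist k P q).card := by
  have hclosed : IsClosed {r : ℝ | 0 ≤ r ∧ k ≤ (P.filter fun p => dist q p ≤ r).card} :=
    isClosed_Ici.inter isClosed_setOf_le_card_filter_dist_le
  have hne : ∃ r, 0 ≤ r ∧ k ≤ (P.filter fun p => dist q p ≤ r).card := by
    refine ⟨∑ p ∈ P, dist q p, by positivity, ?_⟩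
    rwa [Finset.filter_true_of_mem fun p hp =>
      Finset.single_le_sum (f := fun p => dist q p) (fun _ _ => dist_nonneg) hp]
  exact (hclosed.csInf_mem hne ⟨0, fun _ hr => hr.1⟩).2

theorem radk_nonneg : 0 ≤ radk k P :=
  le_csInf (Set.range_nonempty _) (by rintro _ ⟨x, rfl⟩; exact kthNNDist_nonneg)

theorem radk_le_of_le_card_filter {r : ℝ} (hr : 0 ≤ r)
    (hk : k ≤ (P.filter fun p => dist q p ≤ r).card) : radk k P ≤ r :=
  (csInf_le (s := Set.range fun x => kthNNDist k P x)
    ⟨0, by rintro _ ⟨x, rfl⟩; exact kthNNDist_nonneg⟩ ⟨q, rfl⟩).trans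
    (kthNNDist_le_of_le_card_filter hr hk)

end NearestNeighbor

section Lift

variable {d : ℕ}

theorem dist_liftPt_sq (p p' : EuclideanSpace ℝ (Fin d)) (s s' : ℝ) :
    dist (liftPt p s) (liftPt p' s') ^ 2 = dist p p' ^ 2 + (s - s') ^ 2 := by
  rw [EuclideanSpace.dist_eq, EuclideanSpace.dist_eq,
    Real.sq_sqrt (by positivity), Real.sq_sqrt (by positivity), Fin.sum_univ_castSucc]
  simp [liftPt, Real.dist_eq, sq_abs]

theorem dist_liftPt_zero_le (q c : EuclideanSpace ℝ (Fin d)) {r : ℝ} (hr : 0 ≤ r) :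
    dist (liftPt q 0) (liftPt c r) ≤ dist q c + r := by
  refine (pow_le_pow_iff_left₀ dist_nonneg (by positivity) two_ne_zero).mp ?_
  rw [dist_liftPt_sq]
  nlinarith [mul_nonneg (dist_nonneg (x := q) (y := c)) hr]

theorem add_le_sqrt_two_mul_dist_liftPt (q c : EuclideanSpace ℝ (Fin d)) (r : ℝ) :
    dist q c + r ≤ √2 * dist (liftPt q 0) (liftPt c r) := by
  refine (le_abs_self _).trans (abs_le_of_sq_le_sq ?_ (by positivity))
  rw [mul_pow, Real.sq_sqrt zero_le_two, dist_liftPt_sq]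
  nlinarith [sq_nonneg (dist q c - r)]

end Lift

theorem exists_inter_nonempty_forall_lt_disjoint {ι α : Type*} [Fintype ι] [LinearOrder ι]
    [DecidableEq α] (Q : ι → Finset α) {F : Finset α} (hF : F ⊆ Finset.univ.biUnion Q)
    (hne : F.Nonempty) : ∃ i, (Q i ∩ F).Nonempty ∧ ∀ m < i, Disjoint (Q m) F := by
  classical
  set I := Finset.univ.filter fun i => (Q i ∩ F).Nonempty
  have hI : I.Nonempty := by
    obtain ⟨p, hp⟩ := hne
    obtain ⟨i, -, hpi⟩ := Finset.mem_biUnion.mp (hF hp)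
    exact ⟨i, Finset.mem_filter.mpr
      ⟨Finset.mem_univ i, p, Finset.mem_inter.mpr ⟨hpi, hp⟩⟩⟩
  obtain ⟨i, hi, hmin⟩ := I.exists_min_image id hI
  refine ⟨i, (Finset.mem_filter.mp hi).2, fun m hm => ?_⟩
  rw [Finset.disjoint_iff_inter_eq_empty, ← Finset.not_nonempty_iff_eq_empty]
  exact fun hmF => hm.not_ge (hmin m (Finset.mem_filter.mpr ⟨Finset.mem_univ m, hmF⟩))

open Classical in
theorem exists_cluster_radius_le_and_dist_le {d k : ℕ} {ι : Type*} [Fintype ι] [LinearOrder ι]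
    (hk : 1 ≤ k) {P : Finset (EuclideanSpace ℝ (Fin d))} (hkP : k ≤ P.card)
    {c : ι → EuclideanSpace ℝ (Fin d)} {r : ι → ℝ}
    {Q : ι → Finset (EuclideanSpace ℝ (Fin d))}
    (hunion : Finset.univ.biUnion Q = P) (hcover : ∀ i, ↑(Q i) ⊆ closedBall (c i) (r i))
    (happrox : ∀ i, r i / 2 ≤ radk k (P \ (Finset.univ.filter fun j => j < i).biUnion Q))
    (q : EuclideanSpace ℝ (Fin d)) :
    ∃ i, r i ≤ 2 * kthNNDist k P q ∧ dist q (c i) ≤ kthNNDist k P q + r i := by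
  set ρ := kthNNDist k P q
  set F := P.filter fun p => dist q p ≤ ρ
  have hkF : k ≤ F.card := le_card_filter_dist_le_kthNNDist hkP
  obtain ⟨i, hiF, hfirst⟩ := exists_inter_nonempty_forall_lt_disjoint Q
    (hunion ▸ Finset.filter_subset _ P) (Finset.card_pos.mp (Nat.lt_of_lt_of_le hk hkF))
  have hF_remaining : F ⊆ P \ (Finset.univ.filter fun j => j < i).biUnion Q := by
    intro p hp
    refine Finset.mem_sdiff.mpr ⟨Finset.filter_subset _ P hp, fun hpQ => ?_⟩
    obtain ⟨m, hm, hpm⟩ := Finset.mem_biUnion.mp hpQ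
    exact Finset.disjoint_left.mp (hfirst m (Finset.mem_filter.mp hm).2) hpm hp
  have hrad : radk k (P \ (Finset.univ.filter fun j => j < i).biUnion Q) ≤ ρ :=
    radk_le_of_le_card_filter kthNNDist_nonneg (hkF.trans (Finset.card_le_card fun p hp =>
      Finset.mem_filter.mpr ⟨hF_remaining hp, (Finset.mem_filter.mp hp).2⟩))
  refine ⟨i, by linarith [happrox i], ?_⟩
  obtain ⟨p, hp⟩ := hiF
  obtain ⟨hpQ, hpF⟩ := Finset.mem_inter.mp hp
  calc dist q (c i) ≤ dist q p + dist p (c i) := dist_triangle _ _ _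
    _ ≤ ρ + r i := add_le_add (Finset.mem_filter.mp hpF).2 (mem_closedBall.mp (hcover i hpQ))

open Classical in
theorem lifted_ann_gives_const_approx_general {d n k : ℕ} (hk : 1 ≤ k)
    (P : Finset (EuclideanSpace ℝ (Fin d)))
    (c : Fin (n / k) → EuclideanSpace ℝ (Fin d)) (r : Fin (n / k) → ℝ)
    (Q : Fin (n / k) → Finset (EuclideanSpace ℝ (Fin d)))
    (hunion : Finset.univ.biUnion Q = P)
    (hcard : ∀ i, (Q i).card = k)
    (hcover : ∀ i, ↑(Q i) ⊆ closedBall (c i) (r i))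
    (happrox : ∀ i,
      r i / 2 ≤ radk k (P \ (Finset.univ.filter fun j => j < i).biUnion Q) ∧
      radk k (P \ (Finset.univ.filter fun j => j < i).biUnion Q) ≤ r i)
    (q : EuclideanSpace ℝ (Fin d)) (j : Fin (n / k))
    (hj : dist (liftPt q 0) (liftPt (c j) (r j)) ≤
      2 * ⨅ i, dist (liftPt q 0) (liftPt (c i) (r i))) :
    (dist q (c j) + r j) / (10 * Real.sqrt 2) ≤ kthNNDist k P q ∧
      kthNNDist k P q ≤ dist q (c j) + r j := by
  have hr : ∀ i, 0 ≤ r i := fun i => radk_nonneg.trans (happrox i).2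
  have hQP : ∀ i, Q i ⊆ P := fun i =>
    hunion ▸ Finset.subset_biUnion_of_mem Q (Finset.mem_univ i)
  refine ⟨?_, kthNNDist_le_of_subset_closedBall (hQP j) (hcard j).ge (hcover j) (hr j)⟩
  obtain ⟨i, hri, hqi⟩ := exists_cluster_radius_le_and_dist_le hk
    ((hcard j).symm ▸ Finset.card_le_card (hQP j)) hunion hcover (fun i => (happrox i).1) q
  set ρ := kthNNDist k P q
  have hDi : dist (liftPt q 0) (liftPt (c i) (r i)) ≤ 5 * ρ :=
    (dist_liftPt_zero_le q (c i) (hr i)).trans (by linarith)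
  have hinf : ⨅ m, dist (liftPt q 0) (liftPt (c m) (r m)) ≤
      dist (liftPt q 0) (liftPt (c i) (r i)) :=
    ciInf_le ⟨0, by rintro _ ⟨m, rfl⟩; exact dist_nonneg⟩ i
  have hDj : dist (liftPt q 0) (liftPt (c j) (r j)) ≤ 10 * ρ := hj.trans (by linarith)
  rw [div_le_iff₀ (by positivity)]
  calc dist q (c j) + r j ≤ √2 * dist (liftPt q 0) (liftPt (c j) (r j)) :=
        add_le_sqrt_two_mul_dist_liftPt q (c j) (r j)
    _ ≤ √2 * (10 * ρ) := by gcongr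
    _ = ρ * (10 * √2) := by ring

open Classical in
/-- If `b̂_j = (c_j, r_j)` is a 2-approximate Euclidean nearest neighbor of `q̂ = (q, 0)`
among the lifted balls of a 2-approximate quorum clustering, then `v = ‖q - c_j‖ + r_j`
satisfies `v / (10√2) ≤ d_k(P, q) ≤ v`; in particular, `v` is a `15`-approximation. -/
theorem lifted_ann_gives_const_approx {d n k : ℕ} (hk : 1 ≤ k) (hdvd : k ∣ n)
    (hn : 0 < n) (P : Finset (EuclideanSpace ℝ (Fin d))) (hP : P.card = n)
    (c : Fin (n / k) → EuclideanSpace ℝ (Fin d)) (r : Fin (n / k) → ℝ)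
    (Q : Fin (n / k) → Finset (EuclideanSpace ℝ (Fin d)))
    (hdisj : ∀ i j, i ≠ j → Disjoint (Q i) (Q j))
    (hunion : Finset.univ.biUnion Q = P)
    (hcard : ∀ i, (Q i).card = k)
    (hcover : ∀ i, ↑(Q i) ⊆ closedBall (c i) (r i))
    (happrox : ∀ i,
      r i / 2 ≤ radk k (P \ (Finset.univ.filter fun j => j < i).biUnion Q) ∧
      radk k (P \ (Finset.univ.filter fun j => j < i).biUnion Q) ≤ r i)
    (q : EuclideanSpace ℝ (Fin d)) (j : Fin (n / k))
    (hj : dist (liftPt q 0) (liftPt (c j) (r j)) ≤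
      2 * ⨅ i, dist (liftPt q 0) (liftPt (c i) (r i))) :
    (dist q (c j) + r j) / (10 * Real.sqrt 2) ≤ kthNNDist k P q ∧
      kthNNDist k P q ≤ dist q (c j) + r j :=
  lifted_ann_gives_const_approx_general hk P c r Q hunion hcard hcover happrox q j hj
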